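/- Let G be the simple graph on vertex set {0, 1, 2, 3, 4, 5, 6} whose edge set consists of the heptagon edges {{0,1}, {1,2}, {2,3}, {3,4}, {4,5}, {5,6}, {6,0}} together with the chords {{0,2}, {2,4}, {4,6}, {0,4}} (a triangulation of the heptagon, hence a maximal outerplanar graph of order 7). Then for every integer k ≥ 0, G is k-edge magic if and only if k ≡ 2 (mod 7). -/

import Mathlib

open scoped Classical in
/-- A finite simple graph `G` on a finite vertex type is `k`-edge magic if there is a
labeling of its edges that is a bijection onto `{k, k+1, ..., k+q-1}` (where `q` is the
number of edges) such that all the induced vertex sums (the sum of the labels of the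
edges incident to a vertex) are congruent modulo the number of vertices. -/
def IsKEdgeMagic {V : Type*} [Fintype V] (G : SimpleGraph V) (k : ℕ) : Prop :=
  ∃ f : Sym2 V → ℕ,
    Set.BijOn f G.edgeSet ((fun i => k + i) '' Set.Iio G.edgeFinset.card) ∧
    ∃ c : ZMod (Fintype.card V),
      ∀ v : V, ((∑ e ∈ G.incidenceFinset v, f e : ℕ) : ZMod (Fintype.card V)) = c

/-- A concrete simple graph on `Fin 7`. -/
def G6 : SimpleGraph (Fin 7) where
  Adj a b := a ≠ b ∧ s(a,b) ∈ ({s(0,1), s(1,2), s(2,3), s(3,4), s(4,5), s(5,6), s(6,0), s(0,2), s(2,4), s(4,6), s(0,4)} : Finset (Sym2 (Fin 7)))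
  symm := ⟨fun a b h => ⟨h.1.symm, by rw [show s(b,a) = s(a,b) from Sym2.eq_swap]; exact h.2⟩⟩
  loopless := ⟨fun a h => h.1 rfl⟩

/-!
Summing the vertex sums counts every edge label twice, so if all vertex sums are `≡ c (mod p)`,
then `0 = p c ≡ 2 (k + (k + 1) + ⋯ + (k + q - 1)) = q (2k + q - 1) (mod p)`; for `p = 7` and
`q = 11` this forces `k ≡ 2 (mod 7)`. Conversely, shifting all labels by a multiple of `p` does not
change the vertex sums modulo `p`, so a single `2`-edge magic labeling of `G6` suffices.
-/

open Finset

theorem SimpleGraph.sum_sum_incidenceFinset {V M : Type*} [Fintype V] [AddCommMonoid M]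
    [DecidableEq V] (G : SimpleGraph V) [Fintype G.edgeSet] [∀ v, Fintype (G.neighborSet v)]
    (f : Sym2 V → M) :
    ∑ v, ∑ e ∈ G.incidenceFinset v, f e = 2 • ∑ e ∈ G.edgeFinset, f e := by
  simp_rw [incidenceFinset_eq_filter, sum_filter]
  rw [sum_comm, smul_sum]
  refine sum_congr rfl fun e he => ?_
  rw [← sum_filter, sum_const, show ({v | v ∈ e} : Finset V) = e.toFinset by ext; simp,
    Sym2.card_toFinset_of_not_isDiag _ (G.not_isDiag_of_mem_edgeSet (mem_edgeFinset.1 he))]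

theorem two_mul_sum_range_add (k q : ℕ) :
    2 * ∑ i ∈ range q, (k + i) = q * (2 * k + q - 1) := by
  rw [sum_add_distrib, sum_const, card_range, smul_eq_mul, mul_add, mul_comm 2 (∑ i ∈ range q, i),
    sum_range_id_mul_two]
  cases q with
  | zero => simp
  | succ n => rw [Nat.add_sub_cancel, show 2 * k + (n + 1) - 1 = 2 * k + n by omega]; ring

theorem List.Nodup.bijOn_idxOf {α : Type*} [BEq α] [LawfulBEq α] {l : List α} (hl : l.Nodup) :
    Set.BijOn (l.idxOf ·) {a | a ∈ l} (Set.Iio l.length) := by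
  refine ⟨fun a ha => idxOf_lt_length_iff.2 ha, fun a ha b hb hab => ?_, fun i hi => ?_⟩
  · rw [← getElem_idxOf (idxOf_lt_length_iff.2 ha)]
    simp only [hab, getElem_idxOf]
  · exact ⟨l[i], getElem_mem hi, hl.idxOf_getElem i hi⟩

namespace IsKEdgeMagic

variable {V : Type*} [Fintype V] {G : SimpleGraph V} {k : ℕ}

open scoped Classical in
theorem card_dvd (h : IsKEdgeMagic G k) :
    Fintype.card V ∣ #G.edgeFinset * (2 * k + #G.edgeFinset - 1) := by
  obtain ⟨f, hf, c, hc⟩ := h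
  have label_sum : ∑ e ∈ G.edgeFinset, f e = ∑ i ∈ range #G.edgeFinset, (k + i) := by
    rw [← G.coe_edgeFinset, ← coe_range, ← coe_image] at hf
    calc ∑ e ∈ G.edgeFinset, f e = ∑ n ∈ (range #G.edgeFinset).image (k + ·), n :=
          sum_nbij f (fun e he => hf.mapsTo he) hf.injOn hf.surjOn fun _ _ => rfl
      _ = _ := sum_image fun _ _ _ _ => Nat.add_left_cancel
  rw [← ZMod.natCast_eq_zero_iff, ← two_mul_sum_range_add, ← label_sum]
  calc ((2 * ∑ e ∈ G.edgeFinset, f e : ℕ) : ZMod (Fintype.card V))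
      = ((∑ v, ∑ e ∈ G.incidenceFinset v, f e : ℕ) : ZMod (Fintype.card V)) := by
        rw [G.sum_sum_incidenceFinset, smul_eq_mul]
    _ = ∑ _v : V, c := by
        rw [Nat.cast_sum]
        exact sum_congr rfl fun v _ => hc v
    _ = 0 := by simp

open scoped Classical in
theorem of_modEq {k' : ℕ} (h : IsKEdgeMagic G k) (hk : k ≡ k' [MOD Fintype.card V]) :
    IsKEdgeMagic G k' := by
  obtain ⟨f, hf, c, hc⟩ := h
  have shift : Set.BijOn (· - k + k') ((k + ·) '' Set.Iio #G.edgeFinset)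
      ((k' + ·) '' Set.Iio #G.edgeFinset) := by
    have hinj : Set.InjOn (· - k + k') ((k + ·) '' Set.Iio #G.edgeFinset) := by
      rintro _ ⟨i, -, rfl⟩ _ ⟨j, -, rfl⟩ hij
      simp_all
    have := hinj.bijOn_image
    rwa [Set.image_image, show (fun i => k + i - k + k') = (k' + ·) from funext fun i => by omega]
      at this
  refine ⟨fun e => f e - k + k', shift.comp hf, c, fun v => ?_⟩
  rw [← hc v, Nat.cast_sum, Nat.cast_sum]
  refine sum_congr rfl fun e he => ?_
  obtain ⟨i, -, hi⟩ := hf.mapsTo (G.incidenceSet_subset v ((G.mem_incidenceFinset v e).1 he))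
  rw [← hi, Nat.add_sub_cancel_left, ZMod.natCast_eq_natCast_iff]
  simpa [add_comm] using hk.symm.add_right i

end IsKEdgeMagic

namespace G6

/-- The labeling `e ↦ 2 + idxOf e edgesByLabel` is `2`-edge magic, with all vertex sums
`≡ 5 (mod 7)`. -/
def edgesByLabel : List (Sym2 (Fin 7)) :=
  [s(0,1), s(1,2), s(2,3), s(2,4), s(0,4), s(0,2), s(3,4), s(4,5), s(5,6), s(6,0), s(4,6)]

theorem edgeSet_eq : G6.edgeSet = {e | e ∈ edgesByLabel} := by
  ext e
  induction e using Sym2.ind with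
  | _ a b =>
    rw [SimpleGraph.mem_edgeSet]
    revert a b
    show ∀ a b : Fin 7, (a ≠ b ∧ s(a,b) ∈ _) ↔ s(a,b) ∈ edgesByLabel
    decide

theorem edgeFinset_eq [Fintype G6.edgeSet] : G6.edgeFinset = edgesByLabel.toFinset := by
  ext e
  simp [edgeSet_eq]

theorem card_edgeFinset [Fintype G6.edgeSet] : #G6.edgeFinset = 11 := by
  rw [edgeFinset_eq]
  decide

theorem isKEdgeMagic_two : IsKEdgeMagic G6 2 := by
  classical
  have hnodup : edgesByLabel.Nodup := by decide
  have vertex_sums : ∀ v : Fin 7,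
      ∑ e ∈ {e ∈ edgesByLabel.toFinset | v ∈ e}, (2 + edgesByLabel.idxOf e) ≡ 5 [MOD 7] := by
    decide
  refine ⟨fun e => 2 + edgesByLabel.idxOf e, ?_, (5 : ℕ), fun v => ?_⟩
  · rw [edgeSet_eq, edgeFinset_eq, List.toFinset_card_of_nodup hnodup]
    exact (add_right_injective 2).injOn.bijOn_image.comp hnodup.bijOn_idxOf
  · rw [SimpleGraph.incidenceFinset_eq_filter, edgeFinset_eq, ZMod.natCast_eq_natCast_iff,
      Fintype.card_fin]
    convert vertex_sums v

end G6

theorem kEdgeMagic_iff_6 (k : ℕ) : IsKEdgeMagic G6 k ↔ k ≡ 2 [MOD 7] := by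
  classical
  constructor
  · intro h
    have hdvd := h.card_dvd
    rw [G6.card_edgeFinset, Fintype.card_fin] at hdvd
    unfold Nat.ModEq
    omega
  · intro hk
    exact G6.isKEdgeMagic_two.of_modEq (by simpa using hk.symm)
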